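/- Let (K,τ) be a compact abelian group, ψ: (K,τ) → (K,τ) a continuous endomorphism, and C an open finite-index subgroup of K. Then H*(ψ,C) = H_top(ψ, ζ(C)), where ζ(C) = {x + C : x ∈ K} is the (finite) open cover of K by cosets of C. In particular, for every n ≥ 1, the minimal cardinality of a subcover of ζ(C) ∨ ψ⁻¹ζ(C) ∨ … ∨ ψ^{-(n-1)}ζ(C) equals [K : B_n(ψ,C)]. -/

import Mathlib

open Filter Topology ENNReal

variable {G : Type*} [AddCommGroup G]

/-- `B_n(φ,N) = N ∩ φ⁻¹(N) ∩ … ∩ φ^{-(n-1)}(N)`. -/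
noncomputable def Bsub (φ : AddMonoid.End G) (N : AddSubgroup G) (n : ℕ) : AddSubgroup G :=
  ⨅ i ∈ Finset.range n, N.comap (φ ^ i : AddMonoid.End G)

/-- `H*(φ,N) = lim_n log|G/B_n(φ,N)|/n`. -/
noncomputable def Hstar (φ : AddMonoid.End G) (N : AddSubgroup G) : ℝ :=
  limUnder atTop fun n : ℕ => Real.log ((Bsub φ N n).index) / n

/-- Minimal cardinality of a finite subcover of `U`. -/
noncomputable def covN {X : Type*} [TopologicalSpace X] (U : Set (Set X)) : ℕ :=
  sInf {n : ℕ | ∃ F : Finset (Set X), ↑F ⊆ U ∧ ⋃₀ (F : Set (Set X)) = Set.univ ∧ F.card = n}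

/-- `covTraj ψ U n = U ∨ ψ⁻¹U ∨ … ∨ ψ⁻ⁿU`. -/
def covTraj {X : Type*} (ψ : X → X) (U : Set (Set X)) : ℕ → Set (Set X)
  | 0 => U
  | n + 1 => Set.image2 (· ∩ ·) U ((fun s => ψ ⁻¹' s) '' covTraj ψ U n)

/-- Topological entropy of `ψ` with respect to the cover `U`. -/
noncomputable def Htop {X : Type*} [TopologicalSpace X] (ψ : X → X) (U : Set (Set X)) : ℝ :=
  limUnder atTop fun n : ℕ => Real.log (covN (covTraj ψ U n)) / (n + 1)

/-- The cover of `K` by the cosets of the subgroup `C`. -/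
def zeta {K : Type*} [AddCommGroup K] (C : AddSubgroup K) : Set (Set K) :=
  Set.range fun x : K => (fun y => x + y) '' (C : Set K)

/-!
Every member of `ζ(C) ∨ ψ⁻¹ζ(C) ∨ … ∨ ψ⁻ⁿζ(C)` is either empty or a coset of `B_{n+1}(ψ,C)`,
and every such coset occurs. A subcover must therefore contain all `[K : B_{n+1}(ψ,C)]` cosets,
which gives the cardinality formula; the two entropies are then limits of the same sequence
up to a shift of the index.
-/

lemma limUnder_atTop_comp_add_one {α : Type*} [TopologicalSpace α] [Nonempty α] (f : ℕ → α) :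
    limUnder atTop (fun n => f (n + 1)) = limUnder atTop f := by
  simp only [limUnder]
  rw [← Function.comp_def, ← Filter.map_map, Filter.map_add_atTop_eq_nat]

section Covers

variable {X Y : Type*}

lemma card_le_of_fibers {f : X → Y} (hf : Function.Surjective f) {U : Set (Set X)}
    (hU : U ⊆ insert ∅ (Set.range fun y => f ⁻¹' {y})) (F : Finset (Set X)) (hFU : ↑F ⊆ U)
    (hF : ⋃₀ (F : Set (Set X)) = Set.univ) : Nat.card Y ≤ F.card := by
  have hmem (y : Y) : ∃ S : F, Function.surjInv hf y ∈ (S : Set X) := by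
    obtain ⟨S, hS, hx⟩ := Set.mem_sUnion.mp (hF ▸ Set.mem_univ (Function.surjInv hf y))
    exact ⟨⟨S, hS⟩, hx⟩
  choose g hg using hmem
  have hg_inj : Function.Injective g := by
    intro y y' h
    obtain hempty | ⟨c, hc⟩ := hU (hFU (g y).2)
    · exact absurd (hg y) (hempty ▸ Set.notMem_empty _)
    · have hy : y = c := by simpa [← hc, Function.surjInv_eq hf] using hg y
      rw [h] at hc
      have hy' : y' = c := by simpa [← hc, Function.surjInv_eq hf] using hg y'
      exact hy.trans hy'.symm
  simpa using Nat.card_le_card_of_injective g hg_inj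

lemma covN_eq_card_of_fibers [TopologicalSpace X] [Finite Y] {f : X → Y}
    (hf : Function.Surjective f) {U : Set (Set X)} (hfib : ∀ y, f ⁻¹' {y} ∈ U)
    (hU : U ⊆ insert ∅ (Set.range fun y => f ⁻¹' {y})) :
    covN U = Nat.card Y := by
  classical
  have := Fintype.ofFinite Y
  set F := Finset.univ.image fun y => f ⁻¹' {y}
  have hFU : ↑F ⊆ U := by
    rintro _ hS
    obtain ⟨y, -, rfl⟩ := Finset.mem_image.mp hS
    exact hfib y
  have hF : ⋃₀ (F : Set (Set X)) = Set.univ :=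
    Set.eq_univ_of_forall fun x =>
      ⟨f ⁻¹' {f x}, Finset.mem_coe.mpr (Finset.mem_image_of_mem _ (Finset.mem_univ _)), rfl⟩
  refine le_antisymm ?_ (le_csInf ⟨_, F, hFU, hF, rfl⟩ ?_)
  · calc covN U ≤ F.card := Nat.sInf_le ⟨F, hFU, hF, rfl⟩
      _ ≤ Finset.univ.card := Finset.card_image_le
      _ = Nat.card Y := by rw [Finset.card_univ, Nat.card_eq_fintype_card]
  · rintro _ ⟨F', hF'U, hF', rfl⟩
    exact card_le_of_fibers hf hU F' hF'U hF'

end Covers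

section Cosets

variable {K : Type*} [AddCommGroup K]

lemma zeta_eq_range_fibers (B : AddSubgroup K) :
    zeta B = Set.range fun q : K ⧸ B => QuotientAddGroup.mk ⁻¹' {q} := by
  have hcoset (x : K) :
      (fun y => x + y) '' (B : Set K) = QuotientAddGroup.mk ⁻¹' {(x : K ⧸ B)} := by
    ext w
    simp [QuotientAddGroup.eq, eq_comm]
  simp only [zeta, hcoset]
  exact (QuotientAddGroup.mk_surjective (s := B)).range_comp fun q => QuotientAddGroup.mk ⁻¹' {q}

lemma fiber_inf_comap (A B : AddSubgroup K) (ψ : K →+ K) (z : K) :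
    QuotientAddGroup.mk ⁻¹' {(z : K ⧸ A ⊓ B.comap ψ)} =
      QuotientAddGroup.mk ⁻¹' {(z : K ⧸ A)} ∩ ψ ⁻¹' (QuotientAddGroup.mk ⁻¹' {(ψ z : K ⧸ B)}) := by
  ext w
  simp [QuotientAddGroup.eq]

lemma inter_preimage_mem_insert_zeta {A B : AddSubgroup K} (ψ : K →+ K) {S T : Set K}
    (hS : S ∈ zeta A) (hT : T ∈ insert ∅ (zeta B)) :
    S ∩ ψ ⁻¹' T ∈ insert ∅ (zeta (A ⊓ B.comap ψ)) := by
  rw [Set.mem_insert_iff, ← Set.not_nonempty_iff_eq_empty, or_iff_not_imp_left, not_not]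
  rintro ⟨z, hzS, hzT⟩
  rw [zeta_eq_range_fibers] at hS hT ⊢
  obtain ⟨p, rfl⟩ := hS
  obtain rfl | ⟨q, rfl⟩ := hT
  · exact absurd hzT (Set.notMem_empty _)
  · rw [Set.mem_preimage, Set.mem_singleton_iff] at hzS
    rw [Set.mem_preimage, Set.mem_preimage, Set.mem_singleton_iff] at hzT
    subst hzS hzT
    exact ⟨z, fiber_inf_comap A B ψ z⟩

lemma zeta_inf_comap_subset (A B : AddSubgroup K) (ψ : K →+ K) :
    zeta (A ⊓ B.comap ψ) ⊆ Set.image2 (· ∩ ·) (zeta A) ((fun T => ψ ⁻¹' T) '' zeta B) := by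
  simp only [zeta_eq_range_fibers]
  rintro _ ⟨⟨z⟩, rfl⟩
  exact ⟨_, ⟨z, rfl⟩, _, ⟨_, ⟨ψ z, rfl⟩, rfl⟩, (fiber_inf_comap A B ψ z).symm⟩

end Cosets

lemma AddSubgroup.finiteIndex_comap {M H : Type*} [AddGroup M] [AddGroup H] (f : M →+ H)
    (J : AddSubgroup H) [J.FiniteIndex] : (J.comap f).FiniteIndex := by
  have := J.relIndex_comap_ne_zero f (K := ⊤) (by simpa using AddSubgroup.FiniteIndex.index_ne_zero)
  exact ⟨by simpa using this⟩

section Bsub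

variable (φ : AddMonoid.End G) (N : AddSubgroup G)

lemma mem_Bsub {n : ℕ} {x : G} : x ∈ Bsub φ N n ↔ ∀ i < n, (φ ^ i) x ∈ N := by
  simp only [Bsub, AddSubgroup.mem_iInf, Finset.mem_range]
  rfl

@[simp] lemma Bsub_zero : Bsub φ N 0 = ⊤ := by
  simp [Bsub]

lemma Bsub_succ (n : ℕ) : Bsub φ N (n + 1) = N ⊓ (Bsub φ N n).comap φ := by
  ext x
  change _ ↔ x ∈ N ∧ φ x ∈ Bsub φ N n
  simp only [mem_Bsub, Nat.forall_lt_succ_left, AddMonoid.End.coe_pow, Function.iterate_zero,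
    Function.iterate_succ_apply, id]

@[simp] lemma Bsub_one : Bsub φ N 1 = N := by
  rw [Bsub_succ, Bsub_zero]
  exact inf_of_le_left fun x _ => AddSubgroup.mem_top (φ x)

lemma finiteIndex_Bsub [N.FiniteIndex] (n : ℕ) : (Bsub φ N n).FiniteIndex := by
  induction n with
  | zero => rw [Bsub_zero]; infer_instance
  | succ n ih =>
    have := AddSubgroup.finiteIndex_comap φ (Bsub φ N n)
    rw [Bsub_succ]
    infer_instance

end Bsub

section CosetCover

variable {K : Type*} [AddCommGroup K] (ψ : AddMonoid.End K) (C : AddSubgroup K)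

lemma zeta_Bsub_subset_covTraj (n : ℕ) : zeta (Bsub ψ C (n + 1)) ⊆ covTraj ψ (zeta C) n := by
  induction n with
  | zero => rw [Bsub_one, covTraj]
  | succ n ih =>
    rw [Bsub_succ, covTraj]
    exact (zeta_inf_comap_subset C _ ψ).trans (Set.image2_subset_left (Set.image_mono ih))

lemma covTraj_subset_insert_zeta_Bsub (n : ℕ) :
    covTraj ψ (zeta C) n ⊆ insert ∅ (zeta (Bsub ψ C (n + 1))) := by
  induction n with
  | zero => rw [Bsub_one, covTraj]; exact Set.subset_insert _ _
  | succ n ih =>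
    rw [covTraj, Bsub_succ]
    rintro _ ⟨S, hS, _, ⟨T, hT, rfl⟩, rfl⟩
    exact inter_preimage_mem_insert_zeta ψ hS (ih hT)

lemma covN_covTraj_zeta [TopologicalSpace K] [C.FiniteIndex] (n : ℕ) :
    covN (covTraj ψ (zeta C) n) = (Bsub ψ C (n + 1)).index := by
  have := finiteIndex_Bsub ψ C (n + 1)
  have hfibers := zeta_eq_range_fibers (Bsub ψ C (n + 1))
  rw [AddSubgroup.index_eq_card]
  exact covN_eq_card_of_fibers QuotientAddGroup.mk_surjective
    (fun q => zeta_Bsub_subset_covTraj ψ C n (hfibers ▸ ⟨q, rfl⟩))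
    (hfibers ▸ covTraj_subset_insert_zeta_Bsub ψ C n)

end CosetCover

theorem stmt17_general {K : Type*} [AddCommGroup K] [TopologicalSpace K]
    (ψ : AddMonoid.End K)
    (C : AddSubgroup K) (hfi : C.FiniteIndex) :
    Hstar ψ C = Htop (⇑ψ) (zeta C) ∧
    ∀ n : ℕ, covN (covTraj (⇑ψ) (zeta C) n) = (Bsub ψ C (n + 1)).index := by
  have hcov := covN_covTraj_zeta ψ C
  refine ⟨?_, hcov⟩
  rw [Hstar, Htop, ← limUnder_atTop_comp_add_one]
  simp only [hcov, Nat.cast_add, Nat.cast_one]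

theorem stmt17 {K : Type*} [AddCommGroup K] [TopologicalSpace K] [IsTopologicalAddGroup K]
    [CompactSpace K] (ψ : AddMonoid.End K) (hψ : Continuous ψ)
    (C : AddSubgroup K) (hopen : IsOpen (C : Set K)) (hfi : C.FiniteIndex) :
    Hstar ψ C = Htop (⇑ψ) (zeta C) ∧
    ∀ n : ℕ, covN (covTraj (⇑ψ) (zeta C) n) = (Bsub ψ C (n + 1)).index :=
  stmt17_general ψ C hfi
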